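/- arXiv:2604.27909 — 3 statements merged into one kernel-verified Lean document; each statement's English description precedes it below -/
import Mathlib

section
/- Let q ≥ 2, m ≥ n ≥ d−1 ≥ 0 be integers. Then ∑_{j=0}^{n−d+1} ( ∏_{i=0}^{j−1} ((q^{n−i}−1)(q^m−q^i))/(q^{i+1}−1) · ∏_{i=n−d+2}^{n} (q^{i−j}−1)/(q^i−1) ) = q^{m(n−d+1)}. -/
/-!
Put `N = n - d + 1`. Since `∏_{i<j} (q^(n-i) - 1)` and `∏_{i=N+1}^{n} (q^(i-j) - 1)` are both
products of consecutive factors `q^k - 1`, their product telescopes to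
`∏_{i<j} (q^(N-i) - 1) · ∏_{i=N+1}^{n} (q^i - 1)`, so the `j`-th summand becomes
`[N choose j]_q · ∏_{i<j} (q^m - q^i)`. The sum is then the q-binomial expansion
`x^N = ∑_j [N choose j]_q ∏_{i<j} (x - q^i)` at `x = q^m`, which follows by induction on `N`
from the q-Pascal rule and `x · ∏_{i<j} (x - q^i) = ∏_{i<j+1} (x - q^i) + q^j ∏_{i<j} (x - q^i)`.
-/

open Finset

theorem prod_range_sub_mul_prod_Icc_sub {M : Type*} [CommMonoid M] (f : ℕ → M) (j : ℕ)
    {N n : ℕ} (hNn : N ≤ n) :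
    (∏ i ∈ range j, f (n - i)) * ∏ i ∈ Icc (N + 1) n, f (i - j) =
      (∏ i ∈ range j, f (N - i)) * ∏ i ∈ Icc (N + 1) n, f i := by
  induction n, hNn using Nat.le_induction with
  | base => simp
  | succ n hNn ih =>
    have hshift : (∏ i ∈ range j, f (n + 1 - i)) * f (n + 1 - j) =
        f (n + 1) * ∏ i ∈ range j, f (n - i) := by
      rw [← prod_range_succ (fun i => f (n + 1 - i)), prod_range_succ', mul_comm]
      simp only [Nat.add_sub_add_right, Nat.sub_zero]
    rw [prod_Icc_succ_top (by omega), prod_Icc_succ_top (by omega), ← mul_assoc, mul_right_comm,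
      hshift, mul_assoc, ih]
    ac_rfl

section GaussBinom

variable {K : Type*} [Field K]

def gaussBinom (q : K) (N j : ℕ) : K :=
  ∏ i ∈ range j, (q ^ (N - i) - 1) / (q ^ (i + 1) - 1)

def qFalling (q x : K) (j : ℕ) : K :=
  ∏ i ∈ range j, (x - q ^ i)

@[simp]
lemma gaussBinom_zero_right (q : K) (N : ℕ) : gaussBinom q N 0 = 1 := prod_range_zero _

lemma gaussBinom_succ_right (q : K) (N j : ℕ) :
    gaussBinom q N (j + 1) = gaussBinom q N j * ((q ^ (N - j) - 1) / (q ^ (j + 1) - 1)) :=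
  prod_range_succ _ _

lemma gaussBinom_eq_zero_of_lt (q : K) {N j : ℕ} (h : N < j) : gaussBinom q N j = 0 :=
  prod_eq_zero (mem_range.2 h) (by simp)

lemma gaussBinom_succ_succ (q : K) (N j : ℕ) :
    gaussBinom q (N + 1) (j + 1) = (q ^ (N + 1) - 1) / (q ^ (j + 1) - 1) * gaussBinom q N j := by
  simp only [gaussBinom, prod_div_distrib]
  rw [prod_range_succ' (fun i => q ^ (N + 1 - i) - 1), prod_range_succ (fun i => q ^ (i + 1) - 1),
    div_mul_div_comm]
  simp only [Nat.add_sub_add_right, Nat.sub_zero, mul_comm]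

lemma gaussBinom_pascal {q : K} (hq : ∀ k, k ≠ 0 → q ^ k ≠ 1) (N j : ℕ) :
    gaussBinom q (N + 1) (j + 1) = gaussBinom q N j + q ^ (j + 1) * gaussBinom q N (j + 1) := by
  rcases le_or_gt j N with hj | hj
  · have hden : q ^ (j + 1) - 1 ≠ 0 := sub_ne_zero.2 (hq _ j.succ_ne_zero)
    have hpow : q ^ (N + 1) = q ^ (j + 1) * q ^ (N - j) := by
      rw [← pow_add]; congr 1; omega
    rw [gaussBinom_succ_succ, gaussBinom_succ_right, hpow]
    field_simp
    ring
  · simp [gaussBinom_eq_zero_of_lt q hj, gaussBinom_eq_zero_of_lt q (Nat.succ_lt_succ hj),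
      gaussBinom_eq_zero_of_lt q (hj.trans j.lt_succ_self)]

@[simp]
lemma qFalling_zero (q x : K) : qFalling q x 0 = 1 := prod_range_zero _

lemma qFalling_succ (q x : K) (j : ℕ) : qFalling q x (j + 1) = qFalling q x j * (x - q ^ j) :=
  prod_range_succ _ _

theorem sum_gaussBinom_mul_qFalling {q : K} (hq : ∀ k, k ≠ 0 → q ^ k ≠ 1) (x : K) (N : ℕ) :
    ∑ j ∈ range (N + 1), gaussBinom q N j * qFalling q x j = x ^ N := by
  induction N with
  | zero => simp
  | succ N ih =>
    set f := fun j => q ^ j * (gaussBinom q N j * qFalling q x j) with hf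
    have hshift : ∑ j ∈ range (N + 1), f (j + 1) + 1 = ∑ j ∈ range (N + 1), f j := by
      rw [sum_range_succ, sum_range_succ' f]
      simp [hf, gaussBinom_eq_zero_of_lt q N.lt_succ_self]
    calc ∑ j ∈ range (N + 2), gaussBinom q (N + 1) j * qFalling q x j
        = ∑ j ∈ range (N + 1), (gaussBinom q N j * qFalling q x (j + 1) + f (j + 1)) + 1 := by
          rw [sum_range_succ']
          simp [gaussBinom_pascal hq, hf, add_mul, mul_assoc]
      _ = ∑ j ∈ range (N + 1), (gaussBinom q N j * qFalling q x (j + 1) + f j) := by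
          rw [sum_add_distrib, add_assoc, hshift, sum_add_distrib]
      _ = x * ∑ j ∈ range (N + 1), gaussBinom q N j * qFalling q x j := by
          rw [mul_sum]
          refine sum_congr rfl fun j _ => ?_
          rw [qFalling_succ, hf]
          ring
      _ = x ^ (N + 1) := by rw [ih, pow_succ']

lemma prod_mul_prod_Icc_eq_gaussBinom_mul_qFalling {q : K}
    (hq : ∀ k, k ≠ 0 → q ^ k ≠ 1) (x : K) (j : ℕ) {N n : ℕ} (hNn : N ≤ n) :
    (∏ i ∈ range j, (q ^ (n - i) - 1) * (x - q ^ i) / (q ^ (i + 1) - 1)) *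
        ∏ i ∈ Icc (N + 1) n, (q ^ (i - j) - 1) / (q ^ i - 1) =
      gaussBinom q N j * qFalling q x j := by
  have htele := prod_range_sub_mul_prod_Icc_sub (fun k => q ^ k - 1) j hNn
  have hE : ∏ i ∈ Icc (N + 1) n, (q ^ i - 1) ≠ 0 :=
    prod_ne_zero_iff.2 fun i hi => sub_ne_zero.2 (hq i (by grind))
  simp only [gaussBinom, qFalling, prod_div_distrib, prod_mul_distrib] at htele ⊢
  rw [div_mul_div_comm, mul_right_comm (∏ i ∈ range j, (q ^ (n - i) - 1)), htele,
    mul_right_comm (∏ i ∈ range j, (q ^ (N - i) - 1)), mul_div_mul_right _ _ hE,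
    div_mul_eq_mul_div]

end GaussBinom

theorem multiplicity_interpolation_sum_general (q m n d : ℕ) (hq : 2 ≤ q) (hd : 1 ≤ d)
    (hdn : d - 1 ≤ n) :
    ∑ j ∈ Finset.range (n + 2 - d),
      ((∏ i ∈ Finset.range j,
          (((q : ℚ) ^ (n - i) - 1) * ((q : ℚ) ^ m - (q : ℚ) ^ i)) / ((q : ℚ) ^ (i + 1) - 1)) *
        ∏ i ∈ Finset.Icc (n + 2 - d) n, ((q : ℚ) ^ (i - j) - 1) / ((q : ℚ) ^ i - 1)) =
      (q : ℚ) ^ (m * (n + 1 - d)) := by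
  have hpow : ∀ k, k ≠ 0 → (q : ℚ) ^ k ≠ 1 := fun k hk =>
    (one_lt_pow₀ (by exact_mod_cast hq) hk).ne'
  have hlen : n + 2 - d = n + 1 - d + 1 := by omega
  rw [hlen, pow_mul]
  simp_rw [prod_mul_prod_Icc_eq_gaussBinom_mul_qFalling hpow _ _ (by omega : n + 1 - d ≤ n)]
  exact sum_gaussBinom_mul_qFalling hpow _ _

/-- `∑_{j=0}^{n-d+1} ( m(θ_j) · ∏_{i=n-d+2}^{n} (q^{i-j}-1)/(q^i-1) ) = q^{m(n-d+1)}`,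
where `m(θ_j) = ∏_{i=0}^{j-1} ((q^{n-i}-1)(q^m-q^i))/(q^{i+1}-1)` are the eigenvalue
multiplicities of the bilinear forms graph `Bil_q(n,m)`. -/
theorem multiplicity_interpolation_sum (q m n d : ℕ) (hq : 2 ≤ q) (hd : 1 ≤ d)
    (hdn : d - 1 ≤ n) (hnm : n ≤ m) :
    ∑ j ∈ Finset.range (n + 2 - d),
      ((∏ i ∈ Finset.range j,
          (((q : ℚ) ^ (n - i) - 1) * ((q : ℚ) ^ m - (q : ℚ) ^ i)) / ((q : ℚ) ^ (i + 1) - 1)) *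
        ∏ i ∈ Finset.Icc (n + 2 - d) n, ((q : ℚ) ^ (i - j) - 1) / ((q : ℚ) ^ i - 1)) =
      (q : ℚ) ^ (m * (n + 1 - d)) :=
  multiplicity_interpolation_sum_general q m n d hq hd hdn
end

section
/- Let q be a power of a prime p, m ≥ n ≥ 1, t ≥ 2, and suppose t ≢ 1 (mod p). Then V_1 = ((q^n−1)/(q−1))(q^m−1) + (t−1)(q−1) + 1 is not divisible by p. Consequently there is no additive perfect sum-rank code of minimum distance 3 or 4 in F_q^{n×m} × F_q^{t−1}. -/
/-!
For a perfect code `|C| · V₁ = q^N`, so `V₁` divides a power of `p`; since `V₁ > 1`, `p ∣ V₁`.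
On the other hand, the sum-rank ball of radius one consists of the pairs `(0, v)` with `v` of
Hamming weight at most one and the pairs `(A, 0)` with `A` of rank one, and a rank-one matrix is
uniquely `u wᵀ` with `w ≠ 0` and `u` the chosen representative of a point of `ℙ(F_q^n)`. Counting
gives exactly `V₁ = ((q^n - 1)/(q - 1))(q^m - 1) + (t - 1)(q - 1) + 1`, and since `q ≡ 0 (mod p)`
this is `≡ 1 - t`, which is nonzero modulo `p`.
-/

/-- The sum-rank weight of an element of `F_q^{n×m} × F_q^{t-1}`. -/
noncomputable def srkWt {K : Type*} [Field K] [Fintype K] [DecidableEq K]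
    {n m s : ℕ} (x : Matrix (Fin n) (Fin m) K × (Fin s → K)) : ℕ :=
  x.1.rank + hammingNorm x.2

open LinearAlgebra.Projectivization

theorem Nat.card_subtype_ne {α : Type*} [Finite α] (a : α) :
    Nat.card {x : α // x ≠ a} = Nat.card α - 1 := by
  classical
  cases nonempty_fintype α
  simp [Nat.card_eq_fintype_card, Fintype.card_subtype_compl]

theorem Nat.card_subtype_or_of_disjoint {α : Type*} [Finite α] {p q : α → Prop}
    (h : ∀ x, p x → ¬ q x) :
    Nat.card {x // p x ∨ q x} = Nat.card {x // p x} + Nat.card {x // q x} := by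
  classical
  rw [Nat.card_congr (subtypeOrEquiv p q fun r hrp hrq x hx => h x (hrp x hx) (hrq x hx)),
    Nat.card_sum]

section Hamming

variable {ι β : Type*} [Fintype ι] [DecidableEq ι] [Zero β] [DecidableEq β]

theorem hammingNorm_single {i : ι} {b : β} (hb : b ≠ 0) : hammingNorm (Pi.single i b : ι → β) = 1 := by
  rw [hammingNorm, Finset.card_eq_one]
  refine ⟨i, Finset.ext fun j => ?_⟩
  by_cases hj : j = i
  · subst hj; simp [hb]
  · simp [hj]

theorem exists_eq_single_of_hammingNorm_eq_one {v : ι → β} (hv : hammingNorm v = 1) :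
    ∃ i, v i ≠ 0 ∧ v = Pi.single i (v i) := by
  obtain ⟨i, hi⟩ := Finset.card_eq_one.mp hv
  have hsupp : ∀ j, v j ≠ 0 ↔ j = i := fun j => by simpa using Finset.ext_iff.mp hi j
  refine ⟨i, (hsupp i).mpr rfl, funext fun j => ?_⟩
  by_cases hj : j = i
  · subst hj; simp
  · rw [Pi.single_eq_of_ne hj]
    exact not_not.mp (mt (hsupp j).mp hj)

theorem card_hammingNorm_eq_one [Finite β] :
    Nat.card {v : ι → β // hammingNorm v = 1} = Fintype.card ι * (Nat.card β - 1) := by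
  have hbij : Function.Bijective fun x : ι × {b : β // b ≠ 0} =>
      (⟨Pi.single x.1 x.2.1, hammingNorm_single x.2.2⟩ : {v : ι → β // hammingNorm v = 1}) := by
    refine ⟨?_, ?_⟩
    · rintro ⟨i, b, hb⟩ ⟨i', b', hb'⟩ h
      have h := congrArg Subtype.val h
      dsimp only at h
      obtain rfl : i = i' := by
        by_contra hne
        exact hb (by simpa [Pi.single_eq_of_ne hne] using congrFun h i)
      obtain rfl : b = b' := Pi.single_injective i h
      rfl
    · rintro ⟨v, hv⟩
      obtain ⟨i, hi, hvi⟩ := exists_eq_single_of_hammingNorm_eq_one hv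
      exact ⟨(i, ⟨v i, hi⟩), Subtype.ext hvi.symm⟩
  rw [← Nat.card_congr (Equiv.ofBijective _ hbij), Nat.card_prod, Nat.card_eq_fintype_card,
    Nat.card_subtype_ne]

theorem card_hammingNorm_le_one [Finite β] :
    Nat.card {v : ι → β // hammingNorm v ≤ 1} = 1 + Fintype.card ι * (Nat.card β - 1) := by
  have hsplit : ∀ v : ι → β, hammingNorm v ≤ 1 ↔ v = 0 ∨ hammingNorm v = 1 := fun v => by
    rw [← hammingNorm_eq_zero]; omega
  simp_rw [hsplit]
  rw [Nat.card_subtype_or_of_disjoint fun v h0 h1 => by simp [h0] at h1,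
    card_hammingNorm_eq_one, Nat.card_unique]

end Hamming

namespace Matrix

variable {K m n : Type*} [Field K]

theorem rank_eq_zero_iff [Fintype m] [Fintype n] {A : Matrix m n K} : A.rank = 0 ↔ A = 0 := by
  rw [rank_eq_finrank_span_cols, Submodule.finrank_eq_zero, Submodule.span_eq_bot,
    Set.forall_mem_range, ← funext_iff]
  exact ⟨fun h => by ext i j; exact congrFun (congrFun h j) i, by rintro rfl; rfl⟩

theorem span_cols_vecMulVec (u : m → K) {w : n → K} (hw : w ≠ 0) :
    Submodule.span K (Set.range (vecMulVec u w).col) = K ∙ u := by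
  obtain ⟨j, hj⟩ := Function.ne_iff.mp hw
  have hcol : ∀ j, (vecMulVec u w).col j = w j • u := fun j => by
    rw [col_vecMulVec, op_smul_eq_smul]
  refine le_antisymm (Submodule.span_le.mpr ?_) ((Submodule.span_singleton_le_iff_mem _ _).mpr ?_)
  · rintro _ ⟨j, rfl⟩
    rw [hcol]
    exact Submodule.smul_mem _ _ (Submodule.mem_span_singleton_self u)
  · have h := Submodule.smul_mem (Submodule.span K (Set.range (vecMulVec u w).col)) (w j)⁻¹ (Submodule.subset_span (Set.mem_range_self j))
    rwa [hcol, inv_smul_smul₀ hj] at h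

theorem rank_vecMulVec_eq_one [Fintype n] {u : m → K} {w : n → K} (hu : u ≠ 0) (hw : w ≠ 0) :
    (vecMulVec u w).rank = 1 := by
  rw [rank_eq_finrank_span_cols, span_cols_vecMulVec u hw, finrank_span_singleton hu]

theorem exists_eq_vecMulVec_rep_of_rank_eq_one [Fintype n] {A : Matrix m n K} (hA : A.rank = 1) :
    ∃ (L : ℙ K (m → K)) (w : n → K), A = vecMulVec L.rep w := by
  rw [rank_eq_finrank_span_cols] at hA
  set L := Projectivization.mk'' _ hA
  have hcol : ∀ j, ∃ c : K, c • L.rep = A.col j := fun j => by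
    rw [← Submodule.mem_span_singleton, ← L.submodule_eq, Projectivization.submodule_mk'']
    exact Submodule.subset_span ⟨j, rfl⟩
  choose w hw using hcol
  refine ⟨L, w, ?_⟩
  ext i j
  rw [vecMulVec_apply, mul_comm, ← smul_eq_mul, ← Pi.smul_apply, hw j]
  rfl

theorem vecMulVec_rep_injective :
    Function.Injective fun x : ℙ K (m → K) × {w : n → K // w ≠ 0} => vecMulVec x.1.rep x.2.1 := by
  rintro ⟨L, w, hw⟩ ⟨L', w', hw'⟩ h
  dsimp only at h
  obtain rfl : L = L' := by
    apply Projectivization.submodule_injective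
    rw [L.submodule_eq, L'.submodule_eq, ← span_cols_vecMulVec _ hw, h, span_cols_vecMulVec _ hw']
  obtain ⟨i, hi⟩ := Function.ne_iff.mp L.rep_nonzero
  obtain rfl : w = w' := funext fun j => mul_left_cancel₀ hi (congrFun (congrFun h i) j)
  rfl

theorem card_rank_eq_one [Fintype m] [Fintype n] [Finite K] :
    Nat.card {A : Matrix m n K // A.rank = 1} =
      Nat.card (ℙ K (m → K)) * (Nat.card (n → K) - 1) := by
  have hbij : Function.Bijective fun x : ℙ K (m → K) × {w : n → K // w ≠ 0} =>
      (⟨vecMulVec x.1.rep x.2.1, rank_vecMulVec_eq_one x.1.rep_nonzero x.2.2⟩ :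
        {A : Matrix m n K // A.rank = 1}) := by
    refine ⟨fun x y h => vecMulVec_rep_injective (congrArg Subtype.val h), ?_⟩
    rintro ⟨A, hA⟩
    obtain ⟨L, w, rfl⟩ := exists_eq_vecMulVec_rep_of_rank_eq_one hA
    have hw : w ≠ 0 := by
      rintro rfl
      rw [show vecMulVec L.rep (0 : n → K) = 0 by ext; simp [vecMulVec_apply], rank_zero] at hA
      exact zero_ne_one hA
    exact ⟨(L, ⟨w, hw⟩), rfl⟩
  rw [← Nat.card_congr (Equiv.ofBijective _ hbij), Nat.card_prod, Nat.card_subtype_ne]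

end Matrix

/-- The volume `V₁` of a sum-rank ball of radius `1` in `F_q^{n×m} × F_q^s`. -/
def sumRankBallVolumeOne (q n m s : ℕ) : ℕ :=
  (q ^ n - 1) / (q - 1) * (q ^ m - 1) + s * (q - 1) + 1

section SumRank

variable {K : Type*} [Field K] [Fintype K] [DecidableEq K] {n m s : ℕ}

theorem srkWt_le_one_iff {x : Matrix (Fin n) (Fin m) K × (Fin s → K)} :
    srkWt x ≤ 1 ↔ (x.1 = 0 ∧ hammingNorm x.2 ≤ 1) ∨ (x.1.rank = 1 ∧ x.2 = 0) := by
  rw [srkWt, ← Matrix.rank_eq_zero_iff, ← hammingNorm_eq_zero]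
  omega

theorem card_srkWt_le_one :
    Nat.card {x : Matrix (Fin n) (Fin m) K × (Fin s → K) // srkWt x ≤ 1} =
      sumRankBallVolumeOne (Fintype.card K) n m s := by
  simp_rw [srkWt_le_one_iff]
  have hvec : Nat.card {x : Matrix (Fin n) (Fin m) K × (Fin s → K) //
      x.1 = 0 ∧ hammingNorm x.2 ≤ 1} = 1 + s * (Fintype.card K - 1) := by
    rw [Nat.card_congr (Equiv.subtypeProdEquivProd (p := (· = 0)) (q := (hammingNorm · ≤ 1)))]
    rw [Nat.card_prod, Nat.card_unique, card_hammingNorm_le_one, Fintype.card_fin,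
      Nat.card_eq_fintype_card, one_mul]
  have hmat : Nat.card {x : Matrix (Fin n) (Fin m) K × (Fin s → K) // x.1.rank = 1 ∧ x.2 = 0} =
      (Fintype.card K ^ n - 1) / (Fintype.card K - 1) * (Fintype.card K ^ m - 1) := by
    rw [Nat.card_congr (Equiv.subtypeProdEquivProd (p := (Matrix.rank · = 1)) (q := (· = 0)))]
    rw [Nat.card_prod, Nat.card_unique (α := {v : Fin s → K // v = 0}), mul_one,
      Matrix.card_rank_eq_one, Projectivization.card'']
    simp only [Nat.card_eq_fintype_card, Fintype.card_fun, Fintype.card_fin]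
  rw [Nat.card_subtype_or_of_disjoint fun x h0 h1 => by simp [h0.1] at h1, hvec, hmat,
    sumRankBallVolumeOne]
  ring

end SumRank

theorem sumRankBallVolumeOne_cast {p q : ℕ} (hpq : p ∣ q) (hq : 1 < q) {n m : ℕ} (hn : n ≠ 0)
    (hm : m ≠ 0) (s : ℕ) : (sumRankBallVolumeOne q n m s : ZMod p) = -s := by
  have hq0 : (q : ZMod p) = 0 := (ZMod.natCast_eq_zero_iff q p).mpr hpq
  rw [sumRankBallVolumeOne, ← Nat.geomSum_eq hq]
  push_cast [Nat.one_le_pow m q (by omega), hq.le]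
  simp [hq0, hn, hm]

theorem dvd_sumRankBallVolumeOne_iff {p q : ℕ} (hpq : p ∣ q) (hq : 1 < q) {n m : ℕ} (hn : n ≠ 0)
    (hm : m ≠ 0) (s : ℕ) : p ∣ sumRankBallVolumeOne q n m s ↔ p ∣ s := by
  rw [← ZMod.natCast_eq_zero_iff, ← ZMod.natCast_eq_zero_iff,
    sumRankBallVolumeOne_cast hpq hq hn hm, neg_eq_zero]

/-- If `q` is a power of the prime `p`, `m ≥ n ≥ 1`, `t ≥ 2` and `t ≢ 1 (mod p)`, then
`V_1 = ((q^n-1)/(q-1))(q^m-1) + (t-1)(q-1) + 1` is not divisible by `p`; consequently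
there is no nontrivial additive perfect sum-rank code of minimum distance `3` or `4`
in `F_q^{n×m} × F_q^{t-1}`. -/
theorem no_additive_perfect_code (p : ℕ) (hp : p.Prime) (q t m n : ℕ)
    (hq : ∃ k, 1 ≤ k ∧ q = p ^ k) (hn : 1 ≤ n) (hnm : n ≤ m) (ht : 2 ≤ t)
    (htp : ¬ t ≡ 1 [MOD p])
    (K : Type) [Field K] [Fintype K] [DecidableEq K] (hK : Fintype.card K = q) :
    ¬ p ∣ ((q ^ n - 1) / (q - 1) * (q ^ m - 1) + (t - 1) * (q - 1) + 1) ∧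
      ∀ d ∈ ({3, 4} : Set ℕ),
        ¬ ∃ C : AddSubgroup (Matrix (Fin n) (Fin m) K × (Fin (t - 1) → K)),
          Nat.card C ≠ 1 ∧ (∀ x ∈ C, x ≠ 0 → d ≤ srkWt x) ∧
          Nat.card C *
              Nat.card {x : Matrix (Fin n) (Fin m) K × (Fin (t - 1) → K) // srkWt x ≤ 1} =
            q ^ (m * n + t - 1) := by
  obtain ⟨k, hk, rfl⟩ := hq
  have hq : 1 < p ^ k := Nat.one_lt_pow (by omega) hp.one_lt
  have hV : ¬ p ∣ sumRankBallVolumeOne (p ^ k) n m (t - 1) := by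
    rw [dvd_sumRankBallVolumeOne_iff (dvd_pow_self p (by omega)) hq (by omega) (by omega),
      ← Nat.modEq_iff_dvd' (by omega)]
    exact fun h => htp h.symm
  refine ⟨hV, ?_⟩
  rintro d - ⟨C, -, -, hC⟩
  rw [card_srkWt_le_one, hK, ← pow_mul] at hC
  obtain ⟨j, -, hj⟩ := (Nat.dvd_prime_pow hp).mp (Dvd.intro_left _ hC)
  have hj0 : j ≠ 0 := by
    rintro rfl
    have : 0 < (t - 1) * (p ^ k - 1) := Nat.mul_pos (by omega) (by omega)
    rw [pow_zero, sumRankBallVolumeOne] at hj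
    omega
  exact hV (hj ▸ dvd_pow_self p hj0)
end

section
/- Let X be a real symmetric positive semidefinite N×N matrix with block form X = [[1, yᵀ],[y, Y]] where y has length N−1 and Y_{uu} = y_u for all u. Then the sum of all entries of X is at least (trace X)². -/
/-! Test positive semidefiniteness of `X` against `𝟙 - (tr X) e₀`. Since row `0` of `X` is its
diagonal, that row sums to `tr X`, so the quadratic form equals `∑ᵤᵥ Xᵤᵥ - (tr X)²`. -/

theorem Matrix.PosSemidef.two_mul_mul_sum_row_le {n : Type*} [Fintype n] [DecidableEq n]
    {A : Matrix n n ℝ} (hA : A.PosSemidef) (i : n) (c : ℝ) :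
    2 * c * ∑ j, A i j ≤ ∑ j, ∑ k, A j k + c ^ 2 * A i i := by
  have hcol : ∑ j, A j i = ∑ j, A i j :=
    Finset.sum_congr rfl fun j _ => by simpa using hA.isHermitian.apply i j
  have h := hA.dotProduct_mulVec_nonneg (1 - Pi.single i c)
  simp only [star_trivial, Matrix.mulVec_sub, dotProduct_sub, sub_dotProduct,
    single_dotProduct] at h
  simp only [dotProduct, Matrix.mulVec, Pi.one_apply, one_mul, mul_one, Pi.single_apply,
    mul_ite, mul_zero, Finset.sum_ite_eq', Finset.mem_univ, if_true] at h
  rw [← Finset.sum_mul, hcol] at h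
  linarith

/-- If `X` is a real symmetric positive semidefinite `N×N` matrix with `X₀₀ = 1` and
`X₀ᵤ = Xᵤᵤ` for all `u` (i.e. block form `[[1, yᵀ],[y, Y]]` with `Y` having `y` on its
diagonal), then the sum of all entries of `X` is at least `(trace X)²`. -/
theorem sum_entries_ge_trace_sq (N : ℕ) (hN : 0 < N) (X : Matrix (Fin N) (Fin N) ℝ)
    (hX : X.PosSemidef) (h00 : X ⟨0, hN⟩ ⟨0, hN⟩ = 1)
    (hdiag : ∀ u : Fin N, X ⟨0, hN⟩ u = X u u) :
    X.trace ^ 2 ≤ ∑ u : Fin N, ∑ v : Fin N, X u v := by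
  have hrow : ∑ v, X ⟨0, hN⟩ v = X.trace := Finset.sum_congr rfl fun v _ => hdiag v
  have h := hX.two_mul_mul_sum_row_le ⟨0, hN⟩ X.trace
  rw [hrow, h00] at h
  linarith
end
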